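/- For every σ_k ∈ ℝ and all real a > 0 and l ≠ 0, the rational quadratic (RQ) function k(x, y) = σ_k² · (1 + ‖x − y‖² / (2 a l²))^(−a) is a kernel on any real inner product space E: it is symmetric and all its finite Gram matrices are positive semidefinite. -/

import Mathlib

/-!
The RQ kernel is a Gamma scale mixture of Gaussian kernels:
`(1 + s r²)^(-a) = Γ(a)⁻¹ ∫₀^∞ t^(a-1) e^(-(1 + s r²) t) dt`.
Each Gaussian kernel factors as `e^(-τ‖x - y‖²) = f x * f y * e^(2τ⟪x, y⟫)` with `f x = e^(-τ‖x‖²)`,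
the Schur product of a rank-one kernel and the exponential of the linear kernel, and the latter is
a series of Schur powers of a Gram matrix with nonnegative coefficients. Positive semidefiniteness
of Gram matrices survives Schur products, nonnegative scaling, series and integrals.
-/

/-- A function `k : X → X → ℝ` is a kernel if it is symmetric and every finite
Gram matrix of it is positive semidefinite. -/
def IsKernel {X : Type*} (k : X → X → ℝ) : Prop :=
  (∀ x y : X, k x y = k y x) ∧
  ∀ (n : ℕ) (x : Fin n → X),
    (Matrix.of fun i j : Fin n => k (x i) (x j)).PosSemidef

open MeasureTheory Set
open scoped RealInnerProductSpace

section Kernel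

variable {X : Type*} {k k' : X → X → ℝ}

theorem isKernel_iff_sum_mul_nonneg :
    IsKernel k ↔ (∀ x y, k x y = k y x) ∧
      ∀ (n : ℕ) (x : Fin n → X) (v : Fin n → ℝ), 0 ≤ ∑ i, ∑ j, v i * k (x i) (x j) * v j := by
  refine and_congr_right fun hsymm => forall₂_congr fun n x => ?_
  have hherm : (Matrix.of fun i j : Fin n => k (x i) (x j)).IsHermitian :=
    Matrix.IsHermitian.ext fun i j => by simp [hsymm]
  rw [Matrix.posSemidef_iff_dotProduct_mulVec, and_iff_right hherm]
  simp [dotProduct, Matrix.mulVec, Finset.mul_sum, mul_assoc]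

theorem isKernel_mul_self (f : X → ℝ) : IsKernel fun x y => f x * f y :=
  ⟨fun _ _ => mul_comm _ _, fun _ x => Matrix.posSemidef_vecMulVec_self_star (f ∘ x)⟩

namespace IsKernel

theorem mul (hk : IsKernel k) (hk' : IsKernel k') : IsKernel fun x y => k x y * k' x y :=
  ⟨fun x y => by simp only [hk.1 x, hk'.1 x], fun n x => (hk.2 n x).hadamard (hk'.2 n x)⟩

theorem const_mul (hk : IsKernel k) {c : ℝ} (hc : 0 ≤ c) : IsKernel fun x y => c * k x y :=
  ⟨fun x y => by simp only [hk.1 x], fun n x => (hk.2 n x).smul hc⟩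

theorem pow (hk : IsKernel k) (m : ℕ) : IsKernel fun x y => k x y ^ m := by
  induction m with
  | zero => simpa using isKernel_mul_self fun _ : X => (1 : ℝ)
  | succ m ih => simpa only [pow_succ] using ih.mul hk

theorem of_hasSum {ι : Type*} {k : ι → X → X → ℝ} {K : X → X → ℝ} (hk : ∀ i, IsKernel (k i))
    (hK : ∀ x y, HasSum (fun i => k i x y) (K x y)) : IsKernel K := by
  refine isKernel_iff_sum_mul_nonneg.2 ⟨fun x y => (hK x y).unique ?_, fun n x v => ?_⟩
  · simpa only [(hk _).1 y x] using hK y x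
  · exact (hasSum_sum fun i _ => hasSum_sum fun j _ => ((hK _ _).mul_left _).mul_right _).nonneg
      fun m => (isKernel_iff_sum_mul_nonneg.1 (hk m)).2 n x v

theorem exp (hk : IsKernel k) : IsKernel fun x y => Real.exp (k x y) := by
  refine of_hasSum (fun m => (hk.pow m).const_mul (inv_nonneg.2 (Nat.cast_nonneg m.factorial)))
    fun x y => ?_
  simpa [Real.exp_eq_exp_ℝ, div_eq_inv_mul] using NormedSpace.expSeries_div_hasSum_exp (k x y)

theorem integral {T : Type*} [MeasurableSpace T] {μ : Measure T} {k : T → X → X → ℝ}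
    (hk : ∀ᵐ t ∂μ, IsKernel (k t)) (hint : ∀ x y, Integrable (fun t => k t x y) μ) :
    IsKernel fun x y => ∫ t, k t x y ∂μ := by
  refine isKernel_iff_sum_mul_nonneg.2 ⟨fun x y => integral_congr_ae ?_, fun n x v => ?_⟩
  · filter_upwards [hk] with t ht using ht.1 x y
  · have hswap : ∑ i, ∑ j, v i * (∫ t, k t (x i) (x j) ∂μ) * v j
        = ∫ t, ∑ i, ∑ j, v i * k t (x i) (x j) * v j ∂μ := by
      simp only [← integral_const_mul, ← integral_mul_const]
      rw [integral_finsetSum _ fun i _ => integrable_finsetSum _ fun j _ =>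
        ((hint _ _).const_mul _).mul_const _]
      exact Finset.sum_congr rfl fun i _ => (integral_finsetSum _ fun j _ =>
        ((hint _ _).const_mul _).mul_const _).symm
    rw [hswap]
    exact integral_nonneg_of_ae <| by
      filter_upwards [hk] with t ht using (isKernel_iff_sum_mul_nonneg.1 ht).2 n x v

end IsKernel

end Kernel

namespace Real

theorem integrableOn_rpow_mul_exp_neg_mul_Ioi {a r : ℝ} (ha : 0 < a) (hr : 0 < r) :
    IntegrableOn (fun t : ℝ => t ^ (a - 1) * exp (-(r * t))) (Ioi 0) :=
  -- a nonzero Bochner integral can only come from an integrable function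
  Integrable.of_integral_ne_zero <| by
    rw [integral_rpow_mul_exp_neg_mul_Ioi ha hr]
    positivity

theorem rpow_neg_eq_integral {a r : ℝ} (ha : 0 < a) (hr : 0 < r) :
    r ^ (-a) = (Gamma a)⁻¹ * ∫ t in Ioi (0 : ℝ), t ^ (a - 1) * exp (-(r * t)) := by
  rw [integral_rpow_mul_exp_neg_mul_Ioi ha hr, one_div, inv_rpow hr.le, ← rpow_neg hr.le,
    mul_comm (r ^ (-a)), inv_mul_cancel_left₀ (Gamma_pos_of_pos ha).ne']

end Real

section InnerProductSpace

variable {E : Type*} [NormedAddCommGroup E] [InnerProductSpace ℝ E]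

theorem isKernel_inner : IsKernel fun x y : E => ⟪x, y⟫ :=
  ⟨fun x y => real_inner_comm y x, fun _ x => Matrix.posSemidef_gram ℝ x⟩

theorem isKernel_exp_neg_mul_norm_sub_sq {t : ℝ} (ht : 0 ≤ t) :
    IsKernel fun x y : E => Real.exp (-(t * ‖x - y‖ ^ 2)) := by
  have hsplit : ∀ x y : E, Real.exp (-(t * ‖x - y‖ ^ 2)) =
      Real.exp (-(t * ‖x‖ ^ 2)) * Real.exp (-(t * ‖y‖ ^ 2)) * Real.exp (2 * t * ⟪x, y⟫) := by
    intro x y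
    rw [← Real.exp_add, ← Real.exp_add, norm_sub_sq_real]
    ring_nf
  simp only [hsplit]
  exact (isKernel_mul_self _).mul ((isKernel_inner.const_mul (by positivity)).exp)

theorem isKernel_rpow_neg_one_add_mul_norm_sub_sq {a s : ℝ} (ha : 0 < a) (hs : 0 ≤ s) :
    IsKernel fun x y : E => (1 + s * ‖x - y‖ ^ 2) ^ (-a) := by
  simp only [Real.rpow_neg_eq_integral ha (by positivity : 0 < 1 + s * ‖_ - _‖ ^ 2)]
  refine IsKernel.const_mul (IsKernel.integral ?_ fun x y =>
      Real.integrableOn_rpow_mul_exp_neg_mul_Ioi ha (by positivity))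
    (inv_nonneg.2 (Real.Gamma_pos_of_pos ha).le)
  filter_upwards [ae_restrict_mem measurableSet_Ioi] with t (ht : 0 < t)
  have hsplit : ∀ x y : E, t ^ (a - 1) * Real.exp (-((1 + s * ‖x - y‖ ^ 2) * t)) =
      t ^ (a - 1) * Real.exp (-t) * Real.exp (-(t * s * ‖x - y‖ ^ 2)) := by
    intro x y
    rw [mul_assoc, ← Real.exp_add]
    ring_nf
  simp only [hsplit]
  exact (isKernel_exp_neg_mul_norm_sub_sq (by positivity)).const_mul (by positivity)

end InnerProductSpace

theorem rq_isKernel_general {E : Type*} [NormedAddCommGroup E] [InnerProductSpace ℝ E]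
    (σk a l : ℝ) (ha : 0 < a) :
    IsKernel (fun x y : E =>
      σk ^ 2 * (1 + ‖x - y‖ ^ 2 / (2 * a * l ^ 2)) ^ (-a)) := by
  simp only [div_eq_inv_mul]
  exact (isKernel_rpow_neg_one_add_mul_norm_sub_sq ha (by positivity)).const_mul (sq_nonneg σk)

theorem rq_isKernel {E : Type*} [NormedAddCommGroup E] [InnerProductSpace ℝ E]
    (σk a l : ℝ) (ha : 0 < a) (hl : l ≠ 0) :
    IsKernel (fun x y : E =>
      σk ^ 2 * (1 + ‖x - y‖ ^ 2 / (2 * a * l ^ 2)) ^ (-a)) :=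
  rq_isKernel_general σk a l ha
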